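/- arXiv:1204.2024 — 5 statements merged into one kernel-verified Lean document; each statement's English description precedes it below -/
import Mathlib

section
/- Let D be a factor-through-epic subcategory of a right triangulated category C satisfying Assumption 2.10. Let A' →f' D →g' C' →h' TA' be a right triangle with D in D. If c: C → C' satisfies h' ∘ c = 0, then there exists d: C → D with c = g' ∘ d. -/
open CategoryTheory Limits

attribute [local instance] CategoryTheory.Limits.hasBinaryBiproducts_of_finite_biproducts

universe v u

variable (C : Type u) [Category.{v} C]

/-- A sextuple `A ⟶ B ⟶ C ⟶ TA` in a category with an endofunctor `T`. -/
structure RightTriangle (T : C ⥤ C) where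
  obj₁ : C
  obj₂ : C
  obj₃ : C
  mor₁ : obj₁ ⟶ obj₂
  mor₂ : obj₂ ⟶ obj₃
  mor₃ : obj₃ ⟶ T.obj obj₁

variable {C}

/-- An isomorphism of sextuples. -/
def RightTriangle.Iso {T : C ⥤ C} (t t' : RightTriangle C T) : Prop :=
  ∃ (a : t.obj₁ ≅ t'.obj₁) (b : t.obj₂ ≅ t'.obj₂) (c : t.obj₃ ≅ t'.obj₃),
    t.mor₁ ≫ b.hom = a.hom ≫ t'.mor₁ ∧
    t.mor₂ ≫ c.hom = b.hom ≫ t'.mor₂ ∧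
    t.mor₃ ≫ T.map a.hom = c.hom ≫ t'.mor₃

open ZeroObject in
/-- A right triangulated category structure on an additive category `C`
with shift endofunctor `T`, following Assem–Beligiannis–Marmaridis:
axioms TR(0)-TR(5). -/
structure RightTriangulated [Preadditive C] [HasZeroObject C] [HasFiniteBiproducts C]
    (T : C ⥤ C) where
  shift_additive : T.Additive
  dist : Set (RightTriangle C T)
  /-- TR(0): closed under isomorphisms -/
  tr0 : ∀ t ∈ dist, ∀ t', RightTriangle.Iso t t' → t' ∈ dist
  /-- TR(1): `0 ⟶ A ⟶ A ⟶ 0` is a right triangle -/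
  tr1 : ∀ A : C, (⟨0, A, A, 0, 𝟙 A, 0⟩ : RightTriangle C T) ∈ dist
  /-- TR(2): every morphism extends to a right triangle -/
  tr2 : ∀ {A B : C} (f : A ⟶ B), ∃ (Z : C) (g : B ⟶ Z) (h : Z ⟶ T.obj A),
    (⟨A, B, Z, f, g, h⟩ : RightTriangle C T) ∈ dist
  /-- TR(3): rotation -/
  tr3 : ∀ t ∈ dist,
    (⟨t.obj₂, t.obj₃, T.obj t.obj₁, t.mor₂, t.mor₃, -T.map t.mor₁⟩ : RightTriangle C T) ∈ dist
  /-- TR(4): completion of commutative squares to morphisms of right triangles -/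
  tr4 : ∀ t ∈ dist, ∀ t' ∈ dist, ∀ (a : t.obj₁ ⟶ t'.obj₁) (b : t.obj₂ ⟶ t'.obj₂),
    t.mor₁ ≫ b = a ≫ t'.mor₁ →
    ∃ c : t.obj₃ ⟶ t'.obj₃,
      t.mor₂ ≫ c = b ≫ t'.mor₂ ∧ t.mor₃ ≫ T.map a = c ≫ t'.mor₃
  /-- TR(5): the octahedral axiom -/
  tr5 : ∀ {X Y Z U V W : C} (a : X ⟶ Y) (b : Y ⟶ Z) (c : Z ⟶ T.obj X)
    (d : Y ⟶ U) (e : U ⟶ V) (f : V ⟶ T.obj Y) (g : U ⟶ W) (h : W ⟶ T.obj X),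
    (⟨X, Y, Z, a, b, c⟩ : RightTriangle C T) ∈ dist →
    (⟨Y, U, V, d, e, f⟩ : RightTriangle C T) ∈ dist →
    (⟨X, U, W, a ≫ d, g, h⟩ : RightTriangle C T) ∈ dist →
    ∃ (l : Z ⟶ W) (i : W ⟶ V),
      b ≫ l = d ≫ g ∧ l ≫ h = c ∧ g ≫ i = e ∧ i ≫ f = h ≫ T.map a ∧
      (⟨Z, W, V, l, i, f ≫ T.map b⟩ : RightTriangle C T) ∈ dist

/-- Assumption 2.10: the rotation axiom can be reversed. -/
def Assumption210 [Preadditive C] [HasZeroObject C] [HasFiniteBiproducts C]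
    {T : C ⥤ C} (rt : RightTriangulated T) : Prop :=
  ∀ {A B Z : C} (f : A ⟶ B) (g : B ⟶ Z) (h : Z ⟶ T.obj A),
    (⟨B, Z, T.obj A, g, h, -T.map f⟩ : RightTriangle C T) ∈ rt.dist →
    (⟨A, B, Z, f, g, h⟩ : RightTriangle C T) ∈ rt.dist

/-- A morphism factors through an object of `S`. -/
def FactorsThru (S : Set C) {X Y : C} (f : X ⟶ Y) : Prop :=
  ∃ (D : C) (_ : D ∈ S) (u : X ⟶ D) (v : D ⟶ Y), u ≫ v = f

/-- `g : X ⟶ Y` is `S`-epic. -/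
def SEpic (S : Set C) {X Y : C} (g : X ⟶ Y) : Prop :=
  ∀ D ∈ S, ∀ u : D ⟶ Y, ∃ v : D ⟶ X, v ≫ g = u

/-- `f : X ⟶ Y` is `S`-monic. -/
def SMonic (S : Set C) {X Y : C} (f : X ⟶ Y) : Prop :=
  ∀ D ∈ S, ∀ u : X ⟶ D, ∃ v : Y ⟶ D, f ≫ v = u

/-- iterate of an endofunctor. -/
def iterFun (T : C ⥤ C) : ℕ → (C ⥤ C)
  | 0 => 𝟭 C
  | n + 1 => iterFun T n ⋙ T

/-- `S` is factor-through-epic: every `f ∈ [Tⁿ S](TX, TY)` with `n > 0` is of the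
form `T f'` for some `f' ∈ [Tⁿ⁻¹ S](X, Y)`. -/
def FactorThroughEpic (T : C ⥤ C) (S : Set C) : Prop :=
  ∀ (n : ℕ) (X Y : C) (f : T.obj X ⟶ T.obj Y),
    FactorsThru ((iterFun T (n + 1)).obj '' S) f →
    ∃ f' : X ⟶ Y, FactorsThru ((iterFun T n).obj '' S) f' ∧ T.map f' = f

/-- A subcategory (given by a set of objects) closed under isomorphisms,
finite direct sums and direct summands. -/
def IsSubcat [Preadditive C] [HasFiniteBiproducts C] (S : Set C) : Prop :=
  (∀ {X Y : C}, (X ≅ Y) → X ∈ S → Y ∈ S) ∧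
  (∀ {X Y : C}, X ∈ S → Y ∈ S → (X ⊞ Y) ∈ S) ∧
  (∀ {X Y : C} (s : Y ⟶ X) (r : X ⟶ Y), s ≫ r = 𝟙 Y → X ∈ S → Y ∈ S)

section Mutation

variable [Preadditive C] [HasZeroObject C] [HasFiniteBiproducts C]
  {T : C ⥤ C} (rt : RightTriangulated T)

/-- `μ(𝒵; 𝒟)`: objects `X` that lie in `𝒟` or are the left end of a right triangle
`X ⟶ D ⟶ Y ⟶ TX` with `Y ∈ 𝒵`, `D ∈ 𝒟`, the first map a left `𝒟`-approximation and
the second a right `𝒟`-approximation. -/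
def muSet (𝒵 𝒟 : Set C) : Set C :=
  {X | X ∈ 𝒟 ∨ ∃ (D Y : C) (f : X ⟶ D) (g : D ⟶ Y) (h : Y ⟶ T.obj X),
    (⟨X, D, Y, f, g, h⟩ : RightTriangle C T) ∈ rt.dist ∧
    D ∈ 𝒟 ∧ Y ∈ 𝒵 ∧ SMonic 𝒟 f ∧ SEpic 𝒟 g}

/-- `μ⁻¹(𝒳; 𝒟)`: objects `Y` that lie in `𝒟` or are the third term of a right triangle
`X ⟶ D ⟶ Y ⟶ TX` with `X ∈ 𝒳`, `D ∈ 𝒟`, the maps being left/right `𝒟`-approximations. -/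
def muInvSet (𝒳 𝒟 : Set C) : Set C :=
  {Y | Y ∈ 𝒟 ∨ ∃ (X D : C) (f : X ⟶ D) (g : D ⟶ Y) (h : Y ⟶ T.obj X),
    (⟨X, D, Y, f, g, h⟩ : RightTriangle C T) ∈ rt.dist ∧
    X ∈ 𝒳 ∧ D ∈ 𝒟 ∧ SMonic 𝒟 f ∧ SEpic 𝒟 g}

/-- `(𝒳, 𝒴)` is a `𝒟`-mutation pair. -/
def IsMutationPair (𝒳 𝒴 𝒟 : Set C) : Prop :=
  muInvSet rt 𝒳 𝒟 = 𝒴 ∧ muSet rt 𝒴 𝒟 = 𝒳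

/-- `𝒵` is extension-closed. -/
def ExtClosed (𝒵 : Set C) : Prop :=
  ∀ t ∈ rt.dist, t.obj₁ ∈ 𝒵 → t.obj₃ ∈ 𝒵 → t.obj₂ ∈ 𝒵

end Mutation

section Aux
open ZeroObject

variable {C : Type u} [Category.{v} C] [Preadditive C] [HasZeroObject C]
  [HasFiniteBiproducts C] {T : C ⥤ C} (rt : RightTriangulated T)

/-- In any right triangle, `mor₂` is a weak cokernel of `mor₁`. -/
lemma wcok {t : RightTriangle C T} (ht : t ∈ rt.dist) {W : C} (β : t.obj₂ ⟶ W)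
    (hβ : t.mor₁ ≫ β = 0) : ∃ γ : t.obj₃ ⟶ W, t.mor₂ ≫ γ = β := by
  obtain ⟨γ, hγ, -⟩ := rt.tr4 t ht ⟨0, W, W, 0, 𝟙 W, 0⟩ (rt.tr1 W) 0 β (by simpa using hβ)
  exact ⟨γ, by simpa using hγ⟩

/-- In any right triangle, consecutive morphisms compose to zero. -/
lemma dist_comp_zero {t : RightTriangle C T} (ht : t ∈ rt.dist) :
    t.mor₁ ≫ t.mor₂ = 0 := by
  obtain ⟨e, he, -⟩ := rt.tr4 _ (rt.tr3 _ (rt.tr1 t.obj₁)) t ht (𝟙 t.obj₁) t.mor₁ (by simp)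
  simpa using he.symm

/-- Under Assumption 2.10, the shift functor is faithful. -/
lemma T_faithful (h210 : Assumption210 rt) {X Y : C} (u : X ⟶ Y)
    (hu : T.map u = 0) : u = 0 := by
  haveI := rt.shift_additive
  obtain ⟨Q, q, r, hs⟩ := rt.tr2 u
  have h3 := rt.tr3 _ hs
  have h0' : (⟨Y, Q, T.obj X, q, r, -T.map (0 : X ⟶ Y)⟩ : RightTriangle C T) ∈ rt.dist := by
    simpa [hu] using h3
  have h0 := h210 0 q r h0'
  obtain ⟨s, hs'⟩ := wcok rt h0 (𝟙 Y) (by simp)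
  have huq : u ≫ q = 0 := dist_comp_zero rt hs
  calc u = u ≫ (q ≫ s) := by rw [hs', Category.comp_id]
    _ = (u ≫ q) ≫ s := by rw [Category.assoc]
    _ = 0 := by rw [huq, zero_comp]

end Aux

/-- Lemma 3.3: let `𝒟` be a factor-through-epic subcategory of a right triangulated
category satisfying Assumption 2.10, and let `A' ⟶f' D ⟶g' C' ⟶h' TA'` be a right
triangle with `D ∈ 𝒟`. If `c : C ⟶ C'` satisfies `h' ∘ c = 0`, then `c` factors as
`c = g' ∘ d` for some `d : C ⟶ D`. -/
theorem factors_through_of_comp_zero {C : Type u} [Category.{v} C] [Preadditive C]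
    [HasZeroObject C] [HasFiniteBiproducts C] {T : C ⥤ C} (rt : RightTriangulated T)
    (h210 : Assumption210 rt)
    (𝒟 : Set C) (hfte : FactorThroughEpic T 𝒟)
    {A' D C' : C} (f' : A' ⟶ D) (g' : D ⟶ C') (h' : C' ⟶ T.obj A')
    (ht : (⟨A', D, C', f', g', h'⟩ : RightTriangle C T) ∈ rt.dist) (hD : D ∈ 𝒟)
    {Z : C} (c : Z ⟶ C') (hc : c ≫ h' = 0) :
    ∃ d : Z ⟶ D, d ≫ g' = c := by
  haveI := rt.shift_additive
  obtain ⟨Q, q, r, hs⟩ := rt.tr2 c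
  obtain ⟨k, hk⟩ := wcok rt hs h' hc
  have ta := rt.tr3 _ hs
  have tb := rt.tr3 _ (rt.tr3 _ ht)
  obtain ⟨m, hm1, hm2⟩ := rt.tr4 _ ta _ tb (𝟙 C') k (by simpa using hk)
  have hmc : m ≫ T.map g' = T.map c := by
    have h2 : (-T.map c) ≫ T.map (𝟙 C') = m ≫ (-T.map g') := hm2
    simp only [CategoryTheory.Functor.map_id, Category.comp_id, Preadditive.comp_neg] at h2
    exact (neg_inj.mp h2).symm
  obtain ⟨d, -, hd⟩ := hfte 0 Z D m ⟨(iterFun T 1).obj D, ⟨D, hD, rfl⟩, m, 𝟙 _,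
    Category.comp_id m⟩
  have hzero : T.map (d ≫ g' - c) = 0 := by
    rw [Functor.map_sub, Functor.map_comp, hd, hmc, sub_self]
  have := T_faithful rt h210 _ hzero
  exact ⟨d, by rwa [sub_eq_zero] at this⟩
end

section
/- Let D ⊆ Z be subcategories of a right triangulated category C satisfying Assumption 2.10, with D factor-through-epic. Given a morphism (a,b,c) of right triangles from (A →f B →g C →h TA) to (A' →f' D →g' C' →h' TA') where D is in D and f is D-monic: if a factors through an object of D, then c factors through an object of D. -/
open CategoryTheory Limits

attribute [local instance] CategoryTheory.Limits.hasBinaryBiproducts_of_finite_biproducts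

universe v u

variable (C : Type u) [Category.{v} C]

variable {C}

open ZeroObject

/-- Lemma 3.4: given a morphism `(a, b, c)` of right triangles where the middle object
of the second triangle lies in `𝒟`, `f` is `𝒟`-monic, `𝒟` is factor-through-epic and
`C` satisfies Assumption 2.10: if `a` factors through `𝒟`, then `c` factors through `𝒟`. -/
theorem factorsThru_thd_of_factorsThru_fst {C : Type u} [Category.{v} C] [Preadditive C]
    [HasZeroObject C] [HasFiniteBiproducts C] {T : C ⥤ C} (rt : RightTriangulated T)
    (h210 : Assumption210 rt)
    (𝒟 𝒵 : Set C) (h𝒟𝒵 : 𝒟 ⊆ 𝒵) (hfte : FactorThroughEpic T 𝒟)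
    {A B Z A' D C' : C}
    (f : A ⟶ B) (g : B ⟶ Z) (h : Z ⟶ T.obj A)
    (f' : A' ⟶ D) (g' : D ⟶ C') (h' : C' ⟶ T.obj A')
    (ht₁ : (⟨A, B, Z, f, g, h⟩ : RightTriangle C T) ∈ rt.dist)
    (ht₂ : (⟨A', D, C', f', g', h'⟩ : RightTriangle C T) ∈ rt.dist)
    (hD : D ∈ 𝒟) (hf : SMonic 𝒟 f)
    (a : A ⟶ A') (b : B ⟶ D) (c : Z ⟶ C')
    (comm₁ : f ≫ b = a ≫ f') (comm₂ : g ≫ c = b ≫ g') (comm₃ : h ≫ T.map a = c ≫ h')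
    (ha : FactorsThru 𝒟 a) :
    FactorsThru 𝒟 c := by
  haveI : T.Additive := rt.shift_additive
  obtain ⟨E, hE, u, v, huv⟩ := ha
  obtain ⟨u', hu'⟩ := hf E hE u
  -- consecutive morphisms in a distinguished right triangle compose to zero
  have comp12 : ∀ t ∈ rt.dist, t.mor₁ ≫ t.mor₂ = 0 := by
    intro t ht
    have h2 : (⟨t.obj₁, t.obj₁, T.obj 0, 𝟙 t.obj₁, 0, -T.map 0⟩ : RightTriangle C T)
        ∈ rt.dist := rt.tr3 _ (rt.tr1 t.obj₁)
    obtain ⟨cc, hc1, -⟩ := rt.tr4 _ h2 t ht (𝟙 t.obj₁) t.mor₁ rfl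
    simpa using hc1.symm
  -- a map out of obj₂ killing mor₁ factors through mor₂
  have fmid : ∀ t ∈ rt.dist, ∀ {P : C} (y : t.obj₂ ⟶ P), t.mor₁ ≫ y = 0 →
      ∃ z : t.obj₃ ⟶ P, t.mor₂ ≫ z = y := by
    intro t ht P y hy
    obtain ⟨z, hz1, -⟩ := rt.tr4 t ht _ (rt.tr1 P) 0 y (by simpa using hy)
    exact ⟨z, by simpa using hz1⟩
  -- h ≫ T f = 0
  have hTf : h ≫ T.map f = 0 := by
    have := comp12 _ (rt.tr3 _ (rt.tr3 _ ht₁))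
    simpa using this
  -- hence c ≫ h' = 0
  have hafact : a = f ≫ (u' ≫ v) := by rw [← Category.assoc, hu', huv]
  have hch' : c ≫ h' = 0 := by
    rw [← comm₃, hafact, T.map_comp, ← Category.assoc, hTf, zero_comp]
  -- TR4 between rotations gives γ : TZ ⟶ TD with T c = γ ≫ T g'
  have r1 : (⟨Z, T.obj 0, T.obj Z, (0 : Z ⟶ T.obj 0), -T.map (0 : (0 : C) ⟶ Z),
      -T.map (𝟙 Z)⟩ : RightTriangle C T) ∈ rt.dist :=
    rt.tr3 _ (rt.tr3 _ (rt.tr1 Z))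
  have r2 : (⟨C', T.obj A', T.obj D, h', -T.map f', -T.map g'⟩ : RightTriangle C T)
      ∈ rt.dist := rt.tr3 _ (rt.tr3 _ ht₂)
  obtain ⟨γ, -, hγ2⟩ := rt.tr4 _ r1 _ r2 c 0 (by simpa using hch'.symm)
  have hTc : T.map c = γ ≫ T.map g' := by
    have := hγ2
    simp only [Functor.map_id, Preadditive.neg_comp, Preadditive.comp_neg,
      Category.id_comp, neg_inj] at this
    simpa using this
  -- descend γ to γ' : Z ⟶ D via factor-through-epic
  obtain ⟨γ', -, hγ'⟩ := hfte 0 Z D γ ⟨T.obj D, ⟨D, hD, rfl⟩, γ, 𝟙 _, Category.comp_id _⟩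
  have hTδ : T.map (c - γ' ≫ g') = 0 := by
    rw [Functor.map_sub, Functor.map_comp, hγ', hTc, sub_self]
  -- Assumption 2.10 forces c - γ' ≫ g' = 0
  obtain ⟨K, k₁, k₂, hK⟩ := rt.tr2 (0 : Z ⟶ C')
  have hK' : (⟨C', K, T.obj Z, k₁, k₂, -T.map (0 : Z ⟶ C')⟩ : RightTriangle C T)
      ∈ rt.dist := rt.tr3 _ hK
  have hK'' : (⟨C', K, T.obj Z, k₁, k₂, -T.map (c - γ' ≫ g')⟩ : RightTriangle C T)
      ∈ rt.dist := by
    have e : -T.map (c - γ' ≫ g') = -T.map (0 : Z ⟶ C') := by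
      rw [hTδ, Functor.map_zero]
    rw [show (⟨C', K, T.obj Z, k₁, k₂, -T.map (c - γ' ≫ g')⟩ : RightTriangle C T)
        = ⟨C', K, T.obj Z, k₁, k₂, -T.map (0 : Z ⟶ C')⟩ from by rw [e]]
    exact hK'
  have hδtri := h210 (c - γ' ≫ g') k₁ k₂ hK''
  have hδk : (c - γ' ≫ g') ≫ k₁ = 0 := comp12 _ hδtri
  obtain ⟨r, hr⟩ := fmid _ hK (𝟙 C') (by simp)
  have hδ0 : c - γ' ≫ g' = 0 := by
    rw [← Category.comp_id (c - γ' ≫ g'), ← hr, ← Category.assoc, hδk, zero_comp]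
  exact ⟨D, hD, γ', g', (sub_eq_zero.mp hδ0).symm⟩
end

section
/- Let C be a right triangulated category satisfying Assumption 2.10, with subcategories D ⊆ Z where D is factor-through-epic, Z is extension-closed, and Z = μ(Z;D) (every object of Z either lies in D or admits a right triangle Z' → D' → M → TZ' with Z' in Z, D' in D, the first map a left D-approximation and the second a right D-approximation). Then the induced shift σ on the quotient category Z/D, defined by completing left D-approximations to right triangles, is a well-defined additive endofunctor of Z/D. -/
open CategoryTheory Limits

attribute [local instance] CategoryTheory.Limits.hasBinaryBiproducts_of_finite_biproducts

universe v u

variable (C : Type u) [Category.{v} C]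

variable {C}

section Quotient

variable [Preadditive C] (𝒵 𝒟 : Set C)

/-- The ideal relation: two morphisms of the full subcategory on `𝒵` are identified
iff their difference factors through an object of `𝒟`. -/
def stableRel : HomRel (ObjectProperty.FullSubcategory (· ∈ 𝒵)) :=
  fun {X Y} f g =>
    FactorsThru 𝒟 (f.hom - g.hom)

/-- The quotient category `𝒵/𝒟`. -/
abbrev ZModD := CategoryTheory.Quotient (stableRel 𝒵 𝒟)

/-- The quotient functor `𝒵 ⟶ 𝒵/𝒟`. -/
abbrev zquot : ObjectProperty.FullSubcategory (· ∈ 𝒵) ⥤ ZModD 𝒵 𝒟 :=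
  Quotient.functor (stableRel 𝒵 𝒟)

end Quotient

/-!
On morphisms, `σ` sends `μ : M ⟶ N` to any `μ' : σM ⟶ σN` with `γ_M ≫ Tμ = μ' ≫ γ_N`; such a `μ'`
exists because `α_M` is a left `𝒟`-approximation, and the relation is additive. The point is that
`μ'` is determined modulo `𝒟` by the class of `μ`: the difference `x` of two choices satisfies
`x ≫ γ_N = 0`, and we need `x` to factor through `β_N : D_N ⟶ σN`. In a right triangulated
category `Hom(X, -)` need not be exact along triangles; one only gets a factorization of `Tx` through
`Tβ_N`. Since `𝒟` is factor-through-epic it comes from a map `X ⟶ D_N`, and since `T` is faithful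
under Assumption 2.10 the factorization descends to `x`.
-/

namespace CategoryTheory.Quotient

variable {𝒜 ℬ : Type*} [Category 𝒜] [Category ℬ] {r : HomRel 𝒜} {s : HomRel ℬ} {F₀ : 𝒜 → ℬ}

theorem exists_functor_of_rel (R : ∀ {X Y : 𝒜}, (X ⟶ Y) → (F₀ X ⟶ F₀ Y) → Prop)
    (exists_rel : ∀ {X Y : 𝒜} (f : X ⟶ Y), ∃ f', R f f')
    (rel_id : ∀ X : 𝒜, R (𝟙 X) (𝟙 (F₀ X)))
    (rel_comp : ∀ {X Y Z : 𝒜} {f : X ⟶ Y} {g : Y ⟶ Z} {f' g'},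
      R f f' → R g g' → R (f ≫ g) (f' ≫ g'))
    (map_eq : ∀ {X Y : 𝒜} {f₁ f₂ : X ⟶ Y} {g₁ g₂}, (f₁ = f₂ ∨ r f₁ f₂) → R f₁ g₁ → R f₂ g₂ →
      (functor s).map g₁ = (functor s).map g₂) :
    ∃ (G : Quotient r ⥤ Quotient s)
    (hobj : ∀ X, G.obj ((functor r).obj X) = (functor s).obj (F₀ X)),
    ∀ {X Y : 𝒜} (f : X ⟶ Y) (f' : F₀ X ⟶ F₀ Y), R f f' →
      G.map ((functor r).map f) = eqToHom (hobj X) ≫ (functor s).map f' ≫ eqToHom (hobj Y).symm :=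
  ⟨lift r
    { obj := fun X => (functor s).obj (F₀ X)
      map := fun f => (functor s).map (exists_rel f).choose
      map_id := fun X =>
        (map_eq (Or.inl rfl) (exists_rel _).choose_spec (rel_id X)).trans ((functor s).map_id _)
      map_comp := fun f g =>
        (map_eq (Or.inl rfl) (exists_rel _).choose_spec
          (rel_comp (exists_rel f).choose_spec (exists_rel g).choose_spec)).trans
          ((functor s).map_comp _ _) }
    (fun _ _ _ _ h => map_eq (Or.inr h) (exists_rel _).choose_spec (exists_rel _).choose_spec),
  fun _ => rfl, fun f _ h => by
    rw [eqToHom_refl, eqToHom_refl, Category.id_comp, Category.comp_id]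
    exact map_eq (Or.inl rfl) (exists_rel f).choose_spec h⟩

end CategoryTheory.Quotient

namespace RightTriangulated

variable [Preadditive C] [HasZeroObject C] [HasFiniteBiproducts C] {T : C ⥤ C}
  (rt : RightTriangulated T)

lemma mor₁_comp_mor₂ {t : RightTriangle C T} (ht : t ∈ rt.dist) : t.mor₁ ≫ t.mor₂ = 0 := by
  obtain ⟨c, hc, -⟩ := rt.tr4 _ (rt.tr3 _ (rt.tr1 t.obj₁)) t ht (𝟙 t.obj₁) t.mor₁ (by simp)
  simpa using hc.symm

lemma mor₃_comp_map_mor₁ {t : RightTriangle C T} (ht : t ∈ rt.dist) :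
    t.mor₃ ≫ T.map t.mor₁ = 0 := by
  have := rt.shift_additive
  simpa using rt.mor₁_comp_mor₂ (rt.tr3 _ (rt.tr3 _ ht))

lemma yoneda_exact₂ {t : RightTriangle C T} (ht : t ∈ rt.dist) {X : C} (φ : t.obj₂ ⟶ X)
    (hφ : t.mor₁ ≫ φ = 0) : ∃ ψ : t.obj₃ ⟶ X, t.mor₂ ≫ ψ = φ := by
  obtain ⟨c, hc, -⟩ := rt.tr4 t ht _ (rt.tr1 X) 0 φ (by simp [hφ])
  exact ⟨c, by simpa using hc⟩

lemma faithful_shift (h210 : Assumption210 rt) : T.Faithful := by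
  have := rt.shift_additive
  suffices ∀ {X Y : C} (ε : X ⟶ Y), T.map ε = 0 → ε = 0 from
    ⟨fun {_ _ f g} h => sub_eq_zero.1 (this _ (by rw [T.map_sub, h, sub_self]))⟩
  intro X Y ε hε
  obtain ⟨Q, q, q', hQ⟩ := rt.tr2 ε
  have hQ' : (⟨X, Y, Q, 0, q, q'⟩ : RightTriangle C T) ∈ rt.dist :=
    h210 _ _ _ (by simpa [hε] using rt.tr3 _ hQ)
  obtain ⟨r, hr⟩ := rt.yoneda_exact₂ hQ' (𝟙 Y) (by simp)
  calc ε = ε ≫ q ≫ r := by rw [hr, Category.comp_id]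
    _ = 0 := by rw [← Category.assoc, rt.mor₁_comp_mor₂ hQ, zero_comp]

/-- What survives of the exactness of `Hom(X, -)` in a right triangulated category. -/
lemma exists_comp_mor₃_eq_map {t : RightTriangle C T} (ht : t ∈ rt.dist) {X : C}
    (x : X ⟶ t.obj₁) (hx : x ≫ t.mor₁ = 0) : ∃ j : T.obj X ⟶ t.obj₃, j ≫ t.mor₃ = T.map x := by
  have := rt.shift_additive
  obtain ⟨W, w, w', hW⟩ := rt.tr2 (0 : X ⟶ t.obj₂)
  obtain ⟨i, hi₁, hi₂⟩ := rt.tr4 _ hW t ht x (𝟙 _) (by simp [hx])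
  dsimp at hi₁ hi₂
  rw [Category.id_comp] at hi₁
  obtain ⟨π, hπ⟩ := rt.yoneda_exact₂ hW (𝟙 _) (by simp)
  obtain ⟨j, hj⟩ := rt.yoneda_exact₂ (rt.tr3 _ hW) (i - π ≫ t.mor₂) (by
    simp only [Preadditive.comp_sub, hi₁, ← Category.assoc, hπ, Category.id_comp, sub_self])
  -- the triangle `W ⟶ TX ⟶ T t.obj₂` has zero second morphism, so `w'` is right cancellable
  obtain ⟨ψ, hψ⟩ := rt.yoneda_exact₂ (rt.tr3 _ (rt.tr3 _ hW)) (j ≫ t.mor₃ - T.map x) (by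
    dsimp
    rw [Preadditive.comp_sub, ← Category.assoc, hj, hi₂, Preadditive.sub_comp, Category.assoc,
      rt.mor₁_comp_mor₂ (rt.tr3 _ ht), comp_zero, sub_zero, sub_self])
  refine ⟨j, sub_eq_zero.1 ?_⟩
  simpa using hψ.symm

variable {𝒟 : Set C}

lemma exists_comp_mor₂_eq_of_comp_mor₃_eq_zero (h210 : Assumption210 rt)
    (hfte : FactorThroughEpic T 𝒟) {t : RightTriangle C T} (ht : t ∈ rt.dist)
    (hD : t.obj₂ ∈ 𝒟) {X : C} (x : X ⟶ t.obj₃) (hx : x ≫ t.mor₃ = 0) :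
    ∃ j : X ⟶ t.obj₂, j ≫ t.mor₂ = x := by
  have := rt.shift_additive
  have := rt.faithful_shift h210
  obtain ⟨j, hj⟩ := rt.exists_comp_mor₃_eq_map (rt.tr3 _ (rt.tr3 _ ht)) x hx
  obtain ⟨j₀, -, rfl⟩ := hfte 0 X t.obj₂ j ⟨_, ⟨t.obj₂, hD, rfl⟩, j, 𝟙 _, Category.comp_id j⟩
  refine ⟨-j₀, T.map_injective ?_⟩
  simpa using hj

lemma mor₃_comp_map_eq_zero_of_factorsThru {t : RightTriangle C T} (ht : t ∈ rt.dist)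
    (hα : SMonic 𝒟 t.mor₁) {N : C} {e : t.obj₁ ⟶ N} (he : FactorsThru 𝒟 e) :
    t.mor₃ ≫ T.map e = 0 := by
  obtain ⟨D, hD, u, v, rfl⟩ := he
  obtain ⟨u', rfl⟩ := hα D hD u
  simp [← Category.assoc, rt.mor₃_comp_map_mor₁ ht]

lemma exists_hom₃_of_hom₁ {t t' : RightTriangle C T} (ht : t ∈ rt.dist) (ht' : t' ∈ rt.dist)
    (hα : SMonic 𝒟 t.mor₁) (hD : t'.obj₂ ∈ 𝒟) (μ : t.obj₁ ⟶ t'.obj₁) :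
    ∃ μ' : t.obj₃ ⟶ t'.obj₃, t.mor₃ ≫ T.map μ = μ' ≫ t'.mor₃ := by
  obtain ⟨g, hg⟩ := hα _ hD (μ ≫ t'.mor₁)
  obtain ⟨μ', -, h⟩ := rt.tr4 t ht t' ht' μ g hg
  exact ⟨μ', h⟩

lemma factorsThru_sub_hom₃_of_hom₁ {t t' : RightTriangle C T} (ht : t ∈ rt.dist)
    (ht' : t' ∈ rt.dist) (h210 : Assumption210 rt) (hfte : FactorThroughEpic T 𝒟)
    (hα : SMonic 𝒟 t.mor₁) (hD : t'.obj₂ ∈ 𝒟) {μ₁ μ₂ : t.obj₁ ⟶ t'.obj₁}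
    (hμ : μ₁ = μ₂ ∨ FactorsThru 𝒟 (μ₁ - μ₂)) {μ₁' μ₂' : t.obj₃ ⟶ t'.obj₃}
    (h₁ : t.mor₃ ≫ T.map μ₁ = μ₁' ≫ t'.mor₃) (h₂ : t.mor₃ ≫ T.map μ₂ = μ₂' ≫ t'.mor₃) :
    FactorsThru 𝒟 (μ₁' - μ₂') := by
  have := rt.shift_additive
  have hzero : t.mor₃ ≫ T.map (μ₁ - μ₂) = 0 := by
    rcases hμ with rfl | hμ
    · simp
    · exact rt.mor₃_comp_map_eq_zero_of_factorsThru ht hα hμ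
  obtain ⟨j, hj⟩ := rt.exists_comp_mor₂_eq_of_comp_mor₃_eq_zero h210 hfte ht' hD (μ₁' - μ₂')
    (by rw [Preadditive.sub_comp, ← h₁, ← h₂, ← Preadditive.comp_sub, ← T.map_sub, hzero])
  exact ⟨_, hD, j, t'.mor₂, hj⟩

end RightTriangulated

theorem sigma_welldefined_additive_general {C : Type u} [Category.{v} C] [Preadditive C]
    [HasZeroObject C] [HasFiniteBiproducts C] {T : C ⥤ C} (rt : RightTriangulated T)
    (h210 : Assumption210 rt)
    (𝒟 𝒵 : Set C)
    (hfte : FactorThroughEpic T 𝒟)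
    (DM σO : C → C) (α : ∀ M : C, M ⟶ DM M) (β : ∀ M : C, DM M ⟶ σO M)
    (γ : ∀ M : C, σO M ⟶ T.obj M)
    (hDM : ∀ M ∈ 𝒵, DM M ∈ 𝒟) (hσ : ∀ M ∈ 𝒵, σO M ∈ 𝒵)
    (htri : ∀ M ∈ 𝒵, (⟨M, DM M, σO M, α M, β M, γ M⟩ : RightTriangle C T) ∈ rt.dist)
    (hα : ∀ M ∈ 𝒵, SMonic 𝒟 (α M)) :
    ∃ (σfun : ZModD 𝒵 𝒟 ⥤ ZModD 𝒵 𝒟)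
      (hobj : ∀ (M : C) (hM : M ∈ 𝒵),
        σfun.obj ((zquot 𝒵 𝒟).obj ⟨M, hM⟩) = (zquot 𝒵 𝒟).obj ⟨σO M, hσ M hM⟩),
      (∀ (M N : C) (hM : M ∈ 𝒵) (hN : N ∈ 𝒵) (μ : M ⟶ N) (g : DM M ⟶ DM N)
          (μ' : σO M ⟶ σO N),
          α M ≫ g = μ ≫ α N → β M ≫ μ' = g ≫ β N → γ M ≫ T.map μ = μ' ≫ γ N →
          σfun.map ((zquot 𝒵 𝒟).map (ObjectProperty.homMk μ : (⟨M, hM⟩ : ObjectProperty.FullSubcategory (· ∈ 𝒵)) ⟶ ⟨N, hN⟩))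
            = eqToHom (hobj M hM) ≫
              (zquot 𝒵 𝒟).map (ObjectProperty.homMk μ' : (⟨σO M, hσ M hM⟩ : ObjectProperty.FullSubcategory (· ∈ 𝒵)) ⟶ ⟨σO N, hσ N hN⟩)
              ≫ eqToHom (hobj N hN).symm) ∧
      (∀ (M N : C) (hM : M ∈ 𝒵) (hN : N ∈ 𝒵) (μ ν : M ⟶ N)
          (g₁ g₂ : DM M ⟶ DM N) (μ' ν' : σO M ⟶ σO N),
          α M ≫ g₁ = μ ≫ α N → β M ≫ μ' = g₁ ≫ β N → γ M ≫ T.map μ = μ' ≫ γ N →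
          α M ≫ g₂ = ν ≫ α N → β M ≫ ν' = g₂ ≫ β N → γ M ≫ T.map ν = ν' ≫ γ N →
          σfun.map ((zquot 𝒵 𝒟).map (ObjectProperty.homMk (μ + ν) : (⟨M, hM⟩ : ObjectProperty.FullSubcategory (· ∈ 𝒵)) ⟶ ⟨N, hN⟩))
            = eqToHom (hobj M hM) ≫
              (zquot 𝒵 𝒟).map (ObjectProperty.homMk (μ' + ν') : (⟨σO M, hσ M hM⟩ : ObjectProperty.FullSubcategory (· ∈ 𝒵)) ⟶ ⟨σO N, hσ N hN⟩)
              ≫ eqToHom (hobj N hN).symm) := by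
  have := rt.shift_additive
  obtain ⟨σfun, hobj, hmap⟩ := Quotient.exists_functor_of_rel (r := stableRel 𝒵 𝒟)
    (s := stableRel 𝒵 𝒟) (F₀ := fun X => ⟨σO X.obj, hσ X.obj X.property⟩)
    (fun {X Y} μ μ' => γ X.obj ≫ T.map μ.hom = μ'.hom ≫ γ Y.obj)
    (fun {X Y} μ =>
      let ⟨μ', h⟩ := rt.exists_hom₃_of_hom₁ (htri _ X.2) (htri _ Y.2) (hα _ X.2) (hDM _ Y.2) μ.hom
      ⟨ObjectProperty.homMk μ', h⟩)
    (fun _ => by simp)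
    (fun hf hg => by simp [reassoc_of% hf, hg])
    (fun {X Y} _ _ _ _ hμ h₁ h₂ => CategoryTheory.Quotient.sound _ <|
      rt.factorsThru_sub_hom₃_of_hom₁ (htri _ X.2) (htri _ Y.2) h210 hfte (hα _ X.2) (hDM _ Y.2)
        (hμ.imp (congrArg _) id) h₁ h₂)
  refine ⟨σfun, fun M hM => hobj ⟨M, hM⟩, ?_, ?_⟩
  · intro M N hM hN μ g μ' _ _ hμ
    exact hmap (X := ⟨M, hM⟩) (Y := ⟨N, hN⟩) (ObjectProperty.homMk μ)
      (ObjectProperty.homMk μ') hμ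
  · intro M N hM hN μ ν g₁ g₂ μ' ν' _ _ hμ _ _ hν
    exact hmap (X := ⟨M, hM⟩) (Y := ⟨N, hN⟩) (ObjectProperty.homMk (μ + ν))
      (ObjectProperty.homMk (μ' + ν')) (by simp [Preadditive.add_comp, hμ, hν])

theorem sigma_welldefined_additive {C : Type u} [Category.{v} C] [Preadditive C]
    [HasZeroObject C] [HasFiniteBiproducts C] {T : C ⥤ C} (rt : RightTriangulated T)
    (h210 : Assumption210 rt)
    (𝒟 𝒵 : Set C) (hsub𝒟 : IsSubcat 𝒟) (hsub𝒵 : IsSubcat 𝒵) (h𝒟𝒵 : 𝒟 ⊆ 𝒵)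
    (hfte : FactorThroughEpic T 𝒟) (hext : ExtClosed rt 𝒵)
    (hmu : muSet rt 𝒵 𝒟 = 𝒵)
    (DM σO : C → C) (α : ∀ M : C, M ⟶ DM M) (β : ∀ M : C, DM M ⟶ σO M)
    (γ : ∀ M : C, σO M ⟶ T.obj M)
    (hDM : ∀ M ∈ 𝒵, DM M ∈ 𝒟) (hσ : ∀ M ∈ 𝒵, σO M ∈ 𝒵)
    (htri : ∀ M ∈ 𝒵, (⟨M, DM M, σO M, α M, β M, γ M⟩ : RightTriangle C T) ∈ rt.dist)
    (hα : ∀ M ∈ 𝒵, SMonic 𝒟 (α M)) (hβ : ∀ M ∈ 𝒵, SEpic 𝒟 (β M)) :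
    ∃ (σfun : ZModD 𝒵 𝒟 ⥤ ZModD 𝒵 𝒟)
      (hobj : ∀ (M : C) (hM : M ∈ 𝒵),
        σfun.obj ((zquot 𝒵 𝒟).obj ⟨M, hM⟩) = (zquot 𝒵 𝒟).obj ⟨σO M, hσ M hM⟩),
      (∀ (M N : C) (hM : M ∈ 𝒵) (hN : N ∈ 𝒵) (μ : M ⟶ N) (g : DM M ⟶ DM N)
          (μ' : σO M ⟶ σO N),
          α M ≫ g = μ ≫ α N → β M ≫ μ' = g ≫ β N → γ M ≫ T.map μ = μ' ≫ γ N →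
          σfun.map ((zquot 𝒵 𝒟).map (ObjectProperty.homMk μ : (⟨M, hM⟩ : ObjectProperty.FullSubcategory (· ∈ 𝒵)) ⟶ ⟨N, hN⟩))
            = eqToHom (hobj M hM) ≫
              (zquot 𝒵 𝒟).map (ObjectProperty.homMk μ' : (⟨σO M, hσ M hM⟩ : ObjectProperty.FullSubcategory (· ∈ 𝒵)) ⟶ ⟨σO N, hσ N hN⟩)
              ≫ eqToHom (hobj N hN).symm) ∧
      (∀ (M N : C) (hM : M ∈ 𝒵) (hN : N ∈ 𝒵) (μ ν : M ⟶ N)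
          (g₁ g₂ : DM M ⟶ DM N) (μ' ν' : σO M ⟶ σO N),
          α M ≫ g₁ = μ ≫ α N → β M ≫ μ' = g₁ ≫ β N → γ M ≫ T.map μ = μ' ≫ γ N →
          α M ≫ g₂ = ν ≫ α N → β M ≫ ν' = g₂ ≫ β N → γ M ≫ T.map ν = ν' ≫ γ N →
          σfun.map ((zquot 𝒵 𝒟).map (ObjectProperty.homMk (μ + ν) : (⟨M, hM⟩ : ObjectProperty.FullSubcategory (· ∈ 𝒵)) ⟶ ⟨N, hN⟩))
            = eqToHom (hobj M hM) ≫
              (zquot 𝒵 𝒟).map (ObjectProperty.homMk (μ' + ν') : (⟨σO M, hσ M hM⟩ : ObjectProperty.FullSubcategory (· ∈ 𝒵)) ⟶ ⟨σO N, hσ N hN⟩)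
              ≫ eqToHom (hobj N hN).symm) :=
  sigma_welldefined_additive_general rt h210 𝒟 𝒵 hfte DM σO α β γ hDM hσ htri hα
end

section
/- Let (B,S) be an exact category with enough S-injectives such that every S-injective object is S-projective. Then the shift functor T on the stable category B/S (the quotient by the ideal of morphisms factoring through S-injectives) is fully faithful. -/
/-!
Compare the chosen sequences `0 → X → I X → T X → 0` and `0 → Y → I Y → T Y → 0`.
Since `I X` is `S`-projective, every map `T X → T Y` lifts to a map of sequences, which gives
fullness. For faithfulness, if the induced map `T X → T Y` factors through an `S`-injective `J`,
then `J` is `S`-projective, so the factorization lifts along `π Y`; correcting the middle map by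
this lift makes it vanish on `π Y`, and the resulting map `I X → Y` shows that `X → Y` factors
through `μ X`, i.e. vanishes in the stable category.
-/

open CategoryTheory Limits

attribute [local instance] CategoryTheory.Limits.hasBinaryBiproducts_of_finite_biproducts

universe v u

variable (C : Type u) [Category.{v} C]

variable {C}

/-! ## Exact categories and their stable categories -/

section ExactCat

variable (B : Type u) [Category.{v} B] [Preadditive B] [HasFiniteBiproducts B]

/-- A kernel–cokernel pair `0 → X → Y → Z → 0` in a preadditive category. -/
structure AdmSES where
  X : B
  Y : B
  Z : B
  i : X ⟶ Y
  p : Y ⟶ Z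
  zero : i ≫ p = 0
  isKernel : Nonempty (IsLimit (KernelFork.ofι i zero))
  isCokernel : Nonempty (IsColimit (CokernelCofork.ofπ p zero))

variable {B}

/-- `f` is an admissible monomorphism for the class `S`. -/
def AdmMono (S : Set (AdmSES B)) {X Y : B} (f : X ⟶ Y) : Prop :=
  ∃ (Z : B) (p : Y ⟶ Z) (zero : f ≫ p = 0)
    (hk : Nonempty (IsLimit (KernelFork.ofι f zero)))
    (hc : Nonempty (IsColimit (CokernelCofork.ofπ p zero))),
    (⟨X, Y, Z, f, p, zero, hk, hc⟩ : AdmSES B) ∈ S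

/-- `p` is an admissible epimorphism for the class `S`. -/
def AdmEpi (S : Set (AdmSES B)) {Y Z : B} (p : Y ⟶ Z) : Prop :=
  ∃ (X : B) (i : X ⟶ Y) (zero : i ≫ p = 0)
    (hk : Nonempty (IsLimit (KernelFork.ofι i zero)))
    (hc : Nonempty (IsColimit (CokernelCofork.ofπ p zero))),
    (⟨X, Y, Z, i, p, zero, hk, hc⟩ : AdmSES B) ∈ S

/-- Quillen's axioms for an exact structure `S` on an additive category. -/
structure IsExactStructure (S : Set (AdmSES B)) : Prop where
  iso_closed : ∀ s ∈ S, ∀ (s' : AdmSES B) (eX : s.X ≅ s'.X) (eY : s.Y ≅ s'.Y)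
    (eZ : s.Z ≅ s'.Z), s.i ≫ eY.hom = eX.hom ≫ s'.i → s.p ≫ eZ.hom = eY.hom ≫ s'.p →
    s' ∈ S
  split_mem : ∀ A A' : B, AdmMono S (biprod.inl : A ⟶ A ⊞ A')
  id_mono : ∀ A : B, AdmMono S (𝟙 A)
  id_epi : ∀ A : B, AdmEpi S (𝟙 A)
  mono_comp : ∀ {X Y Z : B} (f : X ⟶ Y) (g : Y ⟶ Z),
    AdmMono S f → AdmMono S g → AdmMono S (f ≫ g)
  epi_comp : ∀ {X Y Z : B} (f : X ⟶ Y) (g : Y ⟶ Z),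
    AdmEpi S f → AdmEpi S g → AdmEpi S (f ≫ g)
  mono_pushout : ∀ {X Y A : B} (f : X ⟶ Y), AdmMono S f → ∀ (g : X ⟶ A),
    ∃ (P : B) (i' : A ⟶ P) (j : Y ⟶ P), IsPushout f g j i' ∧ AdmMono S i'
  epi_pullback : ∀ {Y Z A : B} (p : Y ⟶ Z), AdmEpi S p → ∀ (g : A ⟶ Z),
    ∃ (P : B) (p' : P ⟶ A) (j : P ⟶ Y), IsPullback j p' p g ∧ AdmEpi S p'

/-- `I` is `S`-injective. -/
def SInj (S : Set (AdmSES B)) (I : B) : Prop :=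
  ∀ s ∈ S, ∀ f : s.X ⟶ I, ∃ g : s.Y ⟶ I, s.i ≫ g = f

/-- `P` is `S`-projective. -/
def SProj (S : Set (AdmSES B)) (P : B) : Prop :=
  ∀ s ∈ S, ∀ f : P ⟶ s.Z, ∃ g : P ⟶ s.Y, g ≫ s.p = f

/-- The stable relation: two morphisms are identified iff their difference
factors through an `S`-injective object. -/
def injRel (S : Set (AdmSES B)) : HomRel B :=
  fun {X Y} (f g : X ⟶ Y) => FactorsThru {I | SInj S I} (f - g)

/-- The stable category `B/S`. -/
abbrev StMod (S : Set (AdmSES B)) := CategoryTheory.Quotient (injRel S)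

/-- The quotient functor `B ⟶ B/S`. -/
abbrev stquot (S : Set (AdmSES B)) : B ⥤ StMod S :=
  Quotient.functor (injRel S)

end ExactCat

lemma FactorsThru.mono {C : Type u} [Category.{v} C] {𝒟 𝒟' : Set C} (h𝒟 : 𝒟 ⊆ 𝒟')
    {X Y : C} {f : X ⟶ Y} (hf : FactorsThru 𝒟 f) : FactorsThru 𝒟' f := by
  obtain ⟨D, hD, u, v, huv⟩ := hf
  exact ⟨D, h𝒟 hD, u, v, huv⟩

section Biproducts

open ZeroObject

variable {B : Type u} [Category.{v} B] [Preadditive B] [HasFiniteBiproducts B]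
  {S : Set (AdmSES B)}

lemma sInj_zero : SInj S (0 : B) :=
  fun _ _ _ => ⟨0, Subsingleton.elim _ _⟩

lemma SInj.biprod {D D' : B} (hD : SInj S D) (hD' : SInj S D') : SInj S (D ⊞ D') := by
  intro s hs f
  obtain ⟨g₁, hg₁⟩ := hD s hs (f ≫ biprod.fst)
  obtain ⟨g₂, hg₂⟩ := hD' s hs (f ≫ biprod.snd)
  exact ⟨biprod.lift g₁ g₂, by apply biprod.hom_ext <;> simp [hg₁, hg₂]⟩

instance injRel_congruence : Congruence (injRel S) where
  equivalence :=
    { refl := fun _ => ⟨0, sInj_zero, 0, 0, by simp⟩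
      symm := fun ⟨D, hD, u, v, huv⟩ =>
        ⟨D, hD, -u, v, by rw [Preadditive.neg_comp, huv, neg_sub]⟩
      trans := fun ⟨D, hD, u, v, huv⟩ ⟨D', hD', u', v', huv'⟩ =>
        ⟨D ⊞ D', hD.biprod hD', biprod.lift u u', biprod.desc v v', by
          rw [biprod.lift_desc, huv, huv', sub_add_sub_cancel]⟩ }
  comp_left f _ _ := fun ⟨D, hD, u, v, huv⟩ =>
    ⟨D, hD, f ≫ u, v, by rw [Category.assoc, huv, Preadditive.comp_sub]⟩
  comp_right g := fun ⟨D, hD, u, v, huv⟩ =>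
    ⟨D, hD, u, v ≫ g, by rw [← Category.assoc, huv, Preadditive.sub_comp]⟩

end Biproducts

namespace AdmSES

variable {B : Type u} [Category.{v} B] [Preadditive B] {S : Set (AdmSES B)}
  {s s' : AdmSES B}

instance (s : AdmSES B) : Mono s.i :=
  mono_of_isLimit_fork s.isKernel.some

lemma exists_lift_of_comp_p_eq_zero {W : B} (g : W ⟶ s.Y) (hg : g ≫ s.p = 0) :
    ∃ k : W ⟶ s.X, k ≫ s.i = g :=
  let ⟨k, hk⟩ := KernelFork.IsLimit.lift' s.isKernel.some g hg
  ⟨k, hk⟩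

lemma exists_map_of_sProj (hs' : s' ∈ S) (hP : SProj S s.Y) (h : s.Z ⟶ s'.Z) :
    ∃ (f : s.X ⟶ s'.X) (g : s.Y ⟶ s'.Y), s.i ≫ g = f ≫ s'.i ∧ s.p ≫ h = g ≫ s'.p := by
  obtain ⟨g, hg⟩ := hP s' hs' (s.p ≫ h)
  obtain ⟨f, hf⟩ := exists_lift_of_comp_p_eq_zero (s := s') (s.i ≫ g)
    (by rw [Category.assoc, hg, ← Category.assoc, s.zero, zero_comp])
  exact ⟨f, g, hf.symm, hg.symm⟩

lemma exists_map_of_sInj (hs : s ∈ S) (hI : SInj S s'.Y) (f : s.X ⟶ s'.X) :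
    ∃ (g : s.Y ⟶ s'.Y) (h : s.Z ⟶ s'.Z), s.i ≫ g = f ≫ s'.i ∧ s.p ≫ h = g ≫ s'.p := by
  obtain ⟨g, hg⟩ := hI s hs (f ≫ s'.i)
  obtain ⟨h, hh⟩ := CokernelCofork.IsColimit.desc' s.isCokernel.some (g ≫ s'.p)
    (by rw [← Category.assoc, hg, Category.assoc, s'.zero, comp_zero])
  exact ⟨g, h, hg, hh⟩

lemma exists_factor_of_factorsThru_sProj (hs' : s' ∈ S) {f : s.X ⟶ s'.X}
    {g : s.Y ⟶ s'.Y} {h : s.Z ⟶ s'.Z} (hf : s.i ≫ g = f ≫ s'.i) (hh : s.p ≫ h = g ≫ s'.p)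
    (hproj : FactorsThru {J | SProj S J} h) : ∃ k : s.Y ⟶ s'.X, s.i ≫ k = f := by
  obtain ⟨J, hJ, u, v, rfl⟩ := hproj
  obtain ⟨w, hw⟩ := hJ s' hs' v
  -- `g - p u w` kills `s'.p`, so it is `k ≫ s'.i`; then `s.i ≫ k = f` as `s.i ≫ s.p = 0`.
  obtain ⟨k, hk⟩ := exists_lift_of_comp_p_eq_zero (g - s.p ≫ u ≫ w)
    (by simp only [Preadditive.sub_comp, Category.assoc, hw, ← hh, sub_self])
  refine ⟨k, (cancel_mono s'.i).mp ?_⟩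
  rw [Category.assoc, hk, Preadditive.comp_sub, hf, ← Category.assoc s.i s.p, s.zero,
    zero_comp, sub_zero]

end AdmSES

theorem stable_shift_fullyFaithful_general {B : Type u} [Category.{v} B] [Preadditive B]
    [HasFiniteBiproducts B]
    (S : Set (AdmSES B))
    (I Tob : B → B) (μ : ∀ X : B, X ⟶ I X) (π : ∀ X : B, I X ⟶ Tob X)
    (hses : ∀ X : B, ∃ (zero : μ X ≫ π X = 0)
      (hk : Nonempty (IsLimit (KernelFork.ofι (μ X) zero)))
      (hc : Nonempty (IsColimit (CokernelCofork.ofπ (π X) zero))),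
      (⟨X, I X, Tob X, μ X, π X, zero, hk, hc⟩ : AdmSES B) ∈ S)
    (hinj : ∀ X : B, SInj S (I X))
    (hip : ∀ J : B, SInj S J → SProj S J)
    (T' : StMod S ⥤ StMod S)
    (hobj : ∀ X : B, T'.obj ((stquot S).obj X) = (stquot S).obj (Tob X))
    (hmap : ∀ (X Y : B) (f : X ⟶ Y) (g : I X ⟶ I Y) (f' : Tob X ⟶ Tob Y),
      μ X ≫ g = f ≫ μ Y → π X ≫ f' = g ≫ π Y →
      T'.map ((stquot S).map f)
        = eqToHom (hobj X) ≫ (stquot S).map f' ≫ eqToHom (hobj Y).symm) :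
    T'.Full ∧ T'.Faithful := by
  choose zero hker hcoker hmem using hses
  let seq (X : B) : AdmSES B := ⟨X, I X, Tob X, μ X, π X, zero X, hker X, hcoker X⟩
  have hshift {X Y : B} {f : X ⟶ Y} {g : I X ⟶ I Y} {h : Tob X ⟶ Tob Y}
      (hf : μ X ≫ g = f ≫ μ Y) (hh : π X ≫ h = g ≫ π Y) :
      (stquot S).map h =
        eqToHom (hobj X).symm ≫ T'.map ((stquot S).map f) ≫ eqToHom (hobj Y) := by
    simp [hmap X Y f g h hf hh]
  refine ⟨⟨fun {A A'} φ => ?_⟩, ⟨fun {A A'} f₁ f₂ hT => ?_⟩⟩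
  · obtain ⟨X⟩ := A
    obtain ⟨Y⟩ := A'
    obtain ⟨h, hh⟩ := (stquot S).map_surjective (eqToHom (hobj X).symm ≫ φ ≫ eqToHom (hobj Y))
    obtain ⟨f, g, hf, hg⟩ :=
      AdmSES.exists_map_of_sProj (s := seq X) (s' := seq Y) (hmem Y) (hip _ (hinj X)) h
    refine ⟨(stquot S).map f, ?_⟩
    rw [hmap X Y f g h hf hg, hh]
    simp
  · obtain ⟨X⟩ := A
    obtain ⟨Y⟩ := A'
    obtain ⟨f₁, rfl⟩ := (stquot S).map_surjective f₁
    obtain ⟨f₂, rfl⟩ := (stquot S).map_surjective f₂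
    obtain ⟨g₁, h₁, hf₁, hh₁⟩ :=
      AdmSES.exists_map_of_sInj (s := seq X) (s' := seq Y) (hmem X) (hinj Y) f₁
    obtain ⟨g₂, h₂, hf₂, hh₂⟩ :=
      AdmSES.exists_map_of_sInj (s := seq X) (s' := seq Y) (hmem X) (hinj Y) f₂
    have hh : (stquot S).map h₁ = (stquot S).map h₂ := by
      rw [hshift hf₁ hh₁, hshift hf₂ hh₂, hT]
    obtain ⟨k, hk⟩ := AdmSES.exists_factor_of_factorsThru_sProj (s := seq X) (hmem Y)
      (f := f₁ - f₂) (g := g₁ - g₂) (h := h₁ - h₂)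
      (by rw [Preadditive.comp_sub, Preadditive.sub_comp, hf₁, hf₂])
      (by rw [Preadditive.comp_sub, Preadditive.sub_comp, hh₁, hh₂])
      (((Quotient.functor_map_eq_iff _ _ _).mp hh).mono hip)
    exact (Quotient.functor_map_eq_iff _ _ _).mpr ⟨I X, hinj X, μ X, k, hk⟩

/-- The Claim in Example 4 (part 1): let `(B, S)` be an exact category with enough
`S`-injectives such that every `S`-injective is `S`-projective. Then the shift
functor `T` on the stable category `B/S` is fully faithful. -/
theorem stable_shift_fullyFaithful {B : Type u} [Category.{v} B] [Preadditive B]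
    [HasFiniteBiproducts B]
    (S : Set (AdmSES B)) (hS : IsExactStructure S)
    (I Tob : B → B) (μ : ∀ X : B, X ⟶ I X) (π : ∀ X : B, I X ⟶ Tob X)
    (hses : ∀ X : B, ∃ (zero : μ X ≫ π X = 0)
      (hk : Nonempty (IsLimit (KernelFork.ofι (μ X) zero)))
      (hc : Nonempty (IsColimit (CokernelCofork.ofπ (π X) zero))),
      (⟨X, I X, Tob X, μ X, π X, zero, hk, hc⟩ : AdmSES B) ∈ S)
    (hinj : ∀ X : B, SInj S (I X))
    (hip : ∀ J : B, SInj S J → SProj S J)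
    (T' : StMod S ⥤ StMod S)
    (hobj : ∀ X : B, T'.obj ((stquot S).obj X) = (stquot S).obj (Tob X))
    (hmap : ∀ (X Y : B) (f : X ⟶ Y) (g : I X ⟶ I Y) (f' : Tob X ⟶ Tob Y),
      μ X ≫ g = f ≫ μ Y → π X ≫ f' = g ≫ π Y →
      T'.map ((stquot S).map f)
        = eqToHom (hobj X) ≫ (stquot S).map f' ≫ eqToHom (hobj Y).symm) :
    T'.Full ∧ T'.Faithful :=
  stable_shift_fullyFaithful_general S I Tob μ π hses hinj hip T' hobj hmap
end

section
/- Let C be a 2-Calabi-Yau triangulated category with a rigid object E (Ext^1(E,E) = 0), and let X be the full subcategory of objects X with Hom(E, X[1]) = 0. Then (X, X) is an (add E)-mutation pair in C. -/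
/-!
Rigidity of `E` puts `add E` inside `𝒳 = {X | Hom(E, X[1]) = 0}`, and 2-Calabi–Yau duality
makes `Hom(E, X[1]) = 0` equivalent to `Hom(X, E[1]) = 0`. Duality also makes every Hom space
finite-dimensional (if `V ≅ W*` and `W ≅ V*`, Erdős–Kaplansky rules out `dim V` infinite), so
every object has left and right `add E`-approximations by finite powers of `E`.
Completing a right approximation `Eⁿ → Y` of `Y ∈ 𝒳` to a triangle `X → Eⁿ → Y → X[1]`, the
long exact `Hom(E, -)` sequence gives `X ∈ 𝒳`, and `X → Eⁿ` is a left approximation because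
`Hom(Y[-1], E) ≅ Hom(Y, E[1]) = 0`. Conversely, in any triangle `X → D → Y → X[1]` with
`D ∈ add E` whose first two maps are approximations, the long exact sequences put `X` and `Y`
in `𝒳`. Left approximations are treated dually.
-/

open CategoryTheory Limits Pretriangulated

universe v u

variable {C : Type u} [Category.{v} C]

/-- `f : X ⟶ Y` is `S`-monic. -/
def SMonicT (S : Set C) {X Y : C} (f : X ⟶ Y) : Prop :=
  ∀ D ∈ S, ∀ u : X ⟶ D, ∃ v : Y ⟶ D, f ≫ v = u

/-- `g : X ⟶ Y` is `S`-epic. -/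
def SEpicT (S : Set C) {X Y : C} (g : X ⟶ Y) : Prop :=
  ∀ D ∈ S, ∀ u : D ⟶ Y, ∃ v : D ⟶ X, v ≫ g = u

section Tri

variable [HasZeroObject C] [Preadditive C] [HasShift C ℤ]
  [∀ n : ℤ, (shiftFunctor C n).Additive] [Pretriangulated C]

/-- `μ(𝒴; 𝒟)`: objects `X` in `𝒟` or left ends of triangles `X → D → Y → X[1]`
with `Y ∈ 𝒴`, `D ∈ 𝒟`, the maps being a left `𝒟`-approximation and a right
`𝒟`-approximation respectively. -/
def muT (𝒴 𝒟 : Set C) : Set C :=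
  {X | X ∈ 𝒟 ∨ ∃ (D Y : C) (f : X ⟶ D) (g : D ⟶ Y) (h : Y ⟶ X⟦(1 : ℤ)⟧),
    (Triangle.mk f g h ∈ distTriang C) ∧ D ∈ 𝒟 ∧ Y ∈ 𝒴 ∧ SMonicT 𝒟 f ∧ SEpicT 𝒟 g}

/-- `μ⁻¹(𝒳; 𝒟)`: objects `Y` in `𝒟` or third terms of triangles `X → D → Y → X[1]`
with `X ∈ 𝒳`, `D ∈ 𝒟`, the maps being left/right `𝒟`-approximations. -/
def muInvT (𝒳 𝒟 : Set C) : Set C :=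
  {Y | Y ∈ 𝒟 ∨ ∃ (X D : C) (f : X ⟶ D) (g : D ⟶ Y) (h : Y ⟶ X⟦(1 : ℤ)⟧),
    (Triangle.mk f g h ∈ distTriang C) ∧ X ∈ 𝒳 ∧ D ∈ 𝒟 ∧ SMonicT 𝒟 f ∧ SEpicT 𝒟 g}

end Tri

open Cardinal in
lemma Module.rank_lt_of_linearEquiv_dual {k : Type*} [Field k] {A B : Type v} [AddCommGroup A]
    [Module k A] [AddCommGroup B] [Module k B] (e : B ≃ₗ[k] Module.Dual k A)
    (hA : ℵ₀ ≤ Module.rank k A) : Module.rank k A < Module.rank k B := by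
  have h : lift.{v} (lift (Module.rank k A)) < lift.{v} (Module.rank k (Module.Dual k A)) :=
    lift_lt.mpr (lift_rank_lt_rank_dual hA)
  rw [← e.lift_rank_eq, lift_lift] at h
  exact lift_lt.mp h

lemma Module.finiteDimensional_of_linearEquiv_dual_of_linearEquiv_dual (k : Type*) [Field k]
    {V W : Type v} [AddCommGroup V] [Module k V] [AddCommGroup W] [Module k W]
    (e₁ : V ≃ₗ[k] Module.Dual k W) (e₂ : W ≃ₗ[k] Module.Dual k V) :
    FiniteDimensional k V := by
  rw [FiniteDimensional, ← Module.rank_lt_aleph0_iff]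
  by_contra! hV
  have hVW := Module.rank_lt_of_linearEquiv_dual e₂ hV
  exact (Module.rank_lt_of_linearEquiv_dual e₁ (hV.trans hVW.le)).asymm hVW

lemma eq_zero_of_shift_neg_one [Preadditive C] [HasShift C ℤ]
    [∀ n : ℤ, (shiftFunctor C n).Additive] {Y Z : C} (h : ∀ u : Y ⟶ Z⟦(1 : ℤ)⟧, u = 0)
    (w : Y⟦(-1 : ℤ)⟧ ⟶ Z) : w = 0 := by
  apply (shiftFunctor C (1 : ℤ)).map_injective
  rw [Functor.map_zero, ← cancel_epi (shiftNegShift Y (1 : ℤ)).inv, comp_zero]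
  exact h _

section Triangles

variable [HasZeroObject C] [Preadditive C] [HasShift C ℤ]
  [∀ n : ℤ, (shiftFunctor C n).Additive] [Pretriangulated C] {T : Triangle C} {Z : C}

lemma mor₁_comp_surjective_of_distTriang (hT : T ∈ distTriang C)
    (h : ∀ u : T.obj₃ ⟶ Z⟦(1 : ℤ)⟧, u = 0) :
    Function.Surjective (fun e : T.obj₂ ⟶ Z => T.mor₁ ≫ e) := fun w => by
  obtain ⟨e, he⟩ := Triangle.yoneda_exact₂ _ (inv_rot_of_distTriang _ hT) w
    (eq_zero_of_shift_neg_one h _)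
  exact ⟨e, he.symm⟩

lemma comp_mor₂_surjective_of_distTriang (hT : T ∈ distTriang C)
    (h : ∀ u : Z ⟶ T.obj₁⟦(1 : ℤ)⟧, u = 0) :
    Function.Surjective (fun v : Z ⟶ T.obj₂ => v ≫ T.mor₂) := fun w => by
  obtain ⟨v, hv⟩ := Triangle.coyoneda_exact₃ _ hT w (h _)
  exact ⟨v, hv.symm⟩

lemma obj₃_hom_shift_eq_zero_of_distTriang (hT : T ∈ distTriang C)
    (hf : Function.Surjective (fun e : T.obj₂ ⟶ Z => T.mor₁ ≫ e))
    (h₂ : ∀ u : T.obj₂ ⟶ Z⟦(1 : ℤ)⟧, u = 0) (u : T.obj₃ ⟶ Z⟦(1 : ℤ)⟧) : u = 0 := by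
  obtain ⟨g, rfl⟩ := Triangle.yoneda_exact₃ _ hT u (h₂ _)
  obtain ⟨g', rfl⟩ := (shiftFunctor C (1 : ℤ)).map_surjective g
  obtain ⟨e, rfl⟩ := hf g'
  rw [Functor.map_comp, ← Category.assoc, comp_distTriang_mor_zero₃₁ _ hT, zero_comp]

lemma hom_obj₁_shift_eq_zero_of_distTriang (hT : T ∈ distTriang C)
    (hg : Function.Surjective (fun v : Z ⟶ T.obj₂ => v ≫ T.mor₂))
    (h₂ : ∀ u : Z ⟶ T.obj₂⟦(1 : ℤ)⟧, u = 0) (u : Z ⟶ T.obj₁⟦(1 : ℤ)⟧) : u = 0 := by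
  obtain ⟨w, rfl⟩ := Triangle.coyoneda_exact₁ _ hT u (h₂ _)
  obtain ⟨v, rfl⟩ := hg w
  rw [Category.assoc, comp_distTriang_mor_zero₂₃ _ hT, comp_zero]

end Triangles

section AddClosure

variable [Preadditive C] [HasFiniteBiproducts C]

def addObj (E : C) : Set C :=
  {X | ∃ (n : ℕ) (s : X ⟶ ⨁ (fun _ : Fin n => E)) (r : (⨁ fun _ : Fin n => E) ⟶ X), s ≫ r = 𝟙 X}

lemma biproduct_mem_addObj (E : C) (n : ℕ) : (⨁ fun _ : Fin n => E) ∈ addObj E :=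
  ⟨n, 𝟙 _, 𝟙 _, Category.id_comp _⟩

lemma self_mem_addObj (E : C) : E ∈ addObj E :=
  ⟨1, biproduct.ι (fun _ : Fin 1 => E) 0, biproduct.π (fun _ : Fin 1 => E) 0,
    biproduct.ι_π_self (fun _ : Fin 1 => E) 0⟩

variable {E : C}

lemma eq_zero_of_mem_addObj {D T : C} (hT : ∀ w : E ⟶ T, w = 0) (hD : D ∈ addObj E)
    (u : D ⟶ T) : u = 0 := by
  obtain ⟨n, s, r, hsr⟩ := hD
  have hr : r ≫ u = 0 := biproduct.hom_ext' _ _ fun j => by rw [comp_zero]; exact hT _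
  rw [← Category.id_comp u, ← hsr, Category.assoc, hr, comp_zero]

lemma smonicT_addObj_of_surjective {X Y : C} {f : X ⟶ Y}
    (hf : Function.Surjective (fun e : Y ⟶ E => f ≫ e)) : SMonicT (addObj E) f := by
  rintro D ⟨n, s, r, hsr⟩ u
  choose e he using fun i => hf (u ≫ s ≫ biproduct.π (fun _ : Fin n => E) i)
  refine ⟨biproduct.lift e ≫ r, ?_⟩
  have hs : f ≫ biproduct.lift e = u ≫ s := biproduct.hom_ext _ _ fun j => by simpa using he j
  rw [← Category.assoc, hs, Category.assoc, hsr, Category.comp_id]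

lemma sepicT_addObj_of_surjective {X Y : C} {g : Y ⟶ X}
    (hg : Function.Surjective (fun v : E ⟶ Y => v ≫ g)) : SEpicT (addObj E) g := by
  rintro D ⟨n, s, r, hsr⟩ u
  choose v hv using fun i => hg (biproduct.ι (fun _ : Fin n => E) i ≫ r ≫ u)
  refine ⟨s ≫ biproduct.desc v, ?_⟩
  have hr : biproduct.desc v ≫ g = r ≫ u := biproduct.hom_ext' _ _ fun j => by simpa using hv j
  rw [Category.assoc, hr, ← Category.assoc, hsr, Category.id_comp]

end AddClosure

section Approximations

variable (k : Type*) [Field k] [Preadditive C] [Linear k C] [HasFiniteBiproducts C]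

lemma exists_left_approx_biproduct (X E : C) [FiniteDimensional k (X ⟶ E)] :
    ∃ (n : ℕ) (f : X ⟶ ⨁ fun _ : Fin n => E),
      Function.Surjective (fun e : (⨁ fun _ : Fin n => E) ⟶ E => f ≫ e) := by
  let b := Module.finBasis k (X ⟶ E)
  refine ⟨_, biproduct.lift fun i => b i, fun w => ⟨biproduct.desc fun i => b.repr w i • 𝟙 E, ?_⟩⟩
  simp [biproduct.lift_desc]

lemma exists_right_approx_biproduct (E Y : C) [FiniteDimensional k (E ⟶ Y)] :
    ∃ (n : ℕ) (g : (⨁ fun _ : Fin n => E) ⟶ Y),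
      Function.Surjective (fun v : E ⟶ ⨁ fun _ : Fin n => E => v ≫ g) := by
  let b := Module.finBasis k (E ⟶ Y)
  refine ⟨_, biproduct.desc fun i => b i, fun w => ⟨biproduct.lift fun i => b.repr w i • 𝟙 E, ?_⟩⟩
  simp [biproduct.lift_desc]

end Approximations

section CalabiYau

variable (k : Type*) [Field k] [Preadditive C] [Linear k C] [HasShift C ℤ]

lemma finiteDimensional_hom_of_cy [∀ n : ℤ, (shiftFunctor C n).Additive]
    (cy : ∀ A B : C, (A ⟶ B⟦(1 : ℤ)⟧) ≃ₗ[k] Module.Dual k (B ⟶ A⟦(1 : ℤ)⟧)) (A B : C) :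
    FiniteDimensional k (A ⟶ B) :=
  have := Module.finiteDimensional_of_linearEquiv_dual_of_linearEquiv_dual k
    (cy A (B⟦(-1 : ℤ)⟧)) (cy _ A)
  Module.Finite.equiv (Linear.homCongr k (Iso.refl A) (shiftNegShift B (1 : ℤ)))

lemma hom_shift_eq_zero_of_cy
    (cy : ∀ A B : C, (A ⟶ B⟦(1 : ℤ)⟧) ≃ₗ[k] Module.Dual k (B ⟶ A⟦(1 : ℤ)⟧)) {A B : C}
    (h : ∀ g : B ⟶ A⟦(1 : ℤ)⟧, g = 0) (f : A ⟶ B⟦(1 : ℤ)⟧) : f = 0 :=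
  (cy A B).map_eq_zero_iff.mp (LinearMap.ext fun g => by simp [h g])

end CalabiYau

section ExtOnePerp

variable [Preadditive C] [HasShift C ℤ]

def extOnePerp (E : C) : Set C :=
  {X | ∀ f : E ⟶ X⟦(1 : ℤ)⟧, f = 0}

def ExtOneVanishingSymmetric (C : Type u) [Category.{v} C] [Preadditive C] [HasShift C ℤ] :
    Prop :=
  ∀ A B : C, (∀ g : B ⟶ A⟦(1 : ℤ)⟧, g = 0) → ∀ f : A ⟶ B⟦(1 : ℤ)⟧, f = 0

variable {E : C}

lemma mem_extOnePerp_iff (hsymm : ExtOneVanishingSymmetric C) {X : C} :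
    X ∈ extOnePerp E ↔ ∀ u : X ⟶ E⟦(1 : ℤ)⟧, u = 0 :=
  ⟨hsymm X E, hsymm E X⟩

lemma addObj_subset_extOnePerp [HasFiniteBiproducts C] (hsymm : ExtOneVanishingSymmetric C)
    (hE : E ∈ extOnePerp E) : addObj E ⊆ extOnePerp E := fun _ hD =>
  (mem_extOnePerp_iff hsymm).2 (eq_zero_of_mem_addObj hE hD)

end ExtOnePerp

section MutationPair

variable [HasZeroObject C] [Preadditive C] [HasShift C ℤ]
  [∀ n : ℤ, (shiftFunctor C n).Additive] [Pretriangulated C] [HasFiniteBiproducts C]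
  {E : C}

lemma muInvT_addObj_subset_extOnePerp (hsymm : ExtOneVanishingSymmetric C)
    (hE : E ∈ extOnePerp E) (𝒳 : Set C) : muInvT 𝒳 (addObj E) ⊆ extOnePerp E := by
  rintro Y (hY | ⟨X, D, f, g, h, hT, -, hD, hf, -⟩)
  · exact addObj_subset_extOnePerp hsymm hE hY
  · exact (mem_extOnePerp_iff hsymm).2 (obj₃_hom_shift_eq_zero_of_distTriang hT
      (hf E (self_mem_addObj E)) (eq_zero_of_mem_addObj hE hD))

lemma muT_addObj_subset_extOnePerp (hsymm : ExtOneVanishingSymmetric C)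
    (hE : E ∈ extOnePerp E) (𝒴 : Set C) : muT 𝒴 (addObj E) ⊆ extOnePerp E := by
  rintro X (hX | ⟨D, Y, f, g, h, hT, hD, -, -, hg⟩)
  · exact addObj_subset_extOnePerp hsymm hE hX
  · exact hom_obj₁_shift_eq_zero_of_distTriang hT (hg E (self_mem_addObj E))
      (addObj_subset_extOnePerp hsymm hE hD)

lemma extOnePerp_subset_muInvT_addObj (hsymm : ExtOneVanishingSymmetric C)
    (hE : E ∈ extOnePerp E)
    (hright : ∀ Y : C, ∃ (n : ℕ) (g : (⨁ fun _ : Fin n => E) ⟶ Y),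
      Function.Surjective (fun v : E ⟶ ⨁ fun _ : Fin n => E => v ≫ g)) :
    extOnePerp E ⊆ muInvT (extOnePerp E) (addObj E) := by
  intro Y hY
  obtain ⟨n, g, hg⟩ := hright Y
  obtain ⟨X, f, h, hT⟩ := distinguished_cocone_triangle₁ g
  refine Or.inr ⟨X, _, f, g, h, hT, ?_, biproduct_mem_addObj E n, ?_,
    sepicT_addObj_of_surjective hg⟩
  · exact hom_obj₁_shift_eq_zero_of_distTriang hT hg
      (addObj_subset_extOnePerp hsymm hE (biproduct_mem_addObj E n))
  · exact smonicT_addObj_of_surjective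
      (mor₁_comp_surjective_of_distTriang hT ((mem_extOnePerp_iff hsymm).1 hY))

lemma extOnePerp_subset_muT_addObj (hsymm : ExtOneVanishingSymmetric C)
    (hE : E ∈ extOnePerp E)
    (hleft : ∀ X : C, ∃ (n : ℕ) (f : X ⟶ ⨁ fun _ : Fin n => E),
      Function.Surjective (fun e : (⨁ fun _ : Fin n => E) ⟶ E => f ≫ e)) :
    extOnePerp E ⊆ muT (extOnePerp E) (addObj E) := by
  intro X hX
  obtain ⟨n, f, hf⟩ := hleft X
  obtain ⟨Y, g, h, hT⟩ := distinguished_cocone_triangle f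
  refine Or.inr ⟨_, Y, f, g, h, hT, biproduct_mem_addObj E n, ?_,
    smonicT_addObj_of_surjective hf, ?_⟩
  · exact (mem_extOnePerp_iff hsymm).2 (obj₃_hom_shift_eq_zero_of_distTriang hT hf
      (eq_zero_of_mem_addObj hE (biproduct_mem_addObj E n)))
  · exact sepicT_addObj_of_surjective (comp_mor₂_surjective_of_distTriang hT hX)

end MutationPair

/-- Example 3 of Section 3.5: in a 2-Calabi–Yau triangulated category `C` with a
rigid object `E`, the subcategory `𝒳 = {X | Hom(E, X[1]) = 0}` satisfies that
`(𝒳, 𝒳)` is an `add E`-mutation pair. -/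
theorem twoCY_rigid_mutation_pair (k : Type*) [Field k]
    {C : Type u} [Category.{v} C] [Preadditive C] [CategoryTheory.Linear k C]
    [HasZeroObject C] [HasShift C ℤ] [∀ n : ℤ, (shiftFunctor C n).Additive]
    [Pretriangulated C] [HasFiniteBiproducts C]
    -- 2-Calabi-Yau duality `Hom(A, B[1]) ≅ D Hom(B, A[1])`, natural in both variables
    (cy : ∀ A B : C, (A ⟶ B⟦(1 : ℤ)⟧) ≃ₗ[k] Module.Dual k (B ⟶ A⟦(1 : ℤ)⟧))
    (cy_natA : ∀ {A' A B : C} (f : A' ⟶ A) (b : A ⟶ B⟦(1 : ℤ)⟧) (g : B ⟶ A'⟦(1 : ℤ)⟧),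
      cy A' B (f ≫ b) g = cy A B b (g ≫ f⟦(1 : ℤ)⟧'))
    (cy_natB : ∀ {A B B' : C} (h : B ⟶ B') (b : A ⟶ B⟦(1 : ℤ)⟧) (g : B' ⟶ A⟦(1 : ℤ)⟧),
      cy A B' (b ≫ h⟦(1 : ℤ)⟧') g = cy A B b (h ≫ g))
    -- a rigid object `E`
    (E : C) (hE : ∀ f : E ⟶ E⟦(1 : ℤ)⟧, f = 0) :
    muInvT {X : C | ∀ f : E ⟶ X⟦(1 : ℤ)⟧, f = 0}
        {X : C | ∃ (n : ℕ) (s : X ⟶ ⨁ (fun _ : Fin n => E))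
          (r : (⨁ fun _ : Fin n => E) ⟶ X), s ≫ r = 𝟙 X}
      = {X : C | ∀ f : E ⟶ X⟦(1 : ℤ)⟧, f = 0} ∧
    muT {X : C | ∀ f : E ⟶ X⟦(1 : ℤ)⟧, f = 0}
        {X : C | ∃ (n : ℕ) (s : X ⟶ ⨁ (fun _ : Fin n => E))
          (r : (⨁ fun _ : Fin n => E) ⟶ X), s ≫ r = 𝟙 X}
      = {X : C | ∀ f : E ⟶ X⟦(1 : ℤ)⟧, f = 0} := by
  have hsymm : ExtOneVanishingSymmetric C := fun _ _ h => hom_shift_eq_zero_of_cy k cy h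
  have := finiteDimensional_hom_of_cy k cy
  exact ⟨(muInvT_addObj_subset_extOnePerp hsymm hE _).antisymm
      (extOnePerp_subset_muInvT_addObj hsymm hE fun Y => exists_right_approx_biproduct k E Y),
    (muT_addObj_subset_extOnePerp hsymm hE _).antisymm
      (extOnePerp_subset_muT_addObj hsymm hE fun X => exists_left_approx_biproduct k X E)⟩
end
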